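/- Let A, B be bounded operators on a Banach space with ‖e^{tB}‖ ≤ 1 for all t ≥ 0. Then for all α ≥ 0, ‖e^{αA}‖ ≤ e^{α‖A - B‖}. -/

import Mathlib

/-!
Split `exp x = exp (x / n) ^ n`. Since `‖exp (y / n)‖ ≤ 1` and the exponential is Lipschitz on
balls, `‖exp (x / n)‖ ≤ 1 + (‖x - y‖ / n) e^{max(‖x‖, ‖y‖) / n}`, hence
`‖exp x‖ ≤ exp (‖x - y‖ e^{max(‖x‖, ‖y‖) / n})`, which tends to `exp ‖x - y‖` as `n → ∞`.
Apply this to `x = α A`, `y = α B`.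
-/

open NormedSpace Filter Topology Nat

section SeminormedRing

variable {R : Type*} [SeminormedRing R]

theorem norm_mul_pow_le (a b : R) (n : ℕ) : ‖a * b ^ n‖ ≤ ‖a‖ * ‖b‖ ^ n := by
  induction n with
  | zero => simp
  | succ n ih =>
    calc ‖a * b ^ (n + 1)‖ = ‖a * b ^ n * b‖ := by rw [pow_succ, mul_assoc]
      _ ≤ ‖a * b ^ n‖ * ‖b‖ := norm_mul_le _ _
      _ ≤ ‖a‖ * ‖b‖ ^ n * ‖b‖ := by gcongr
      _ = ‖a‖ * ‖b‖ ^ (n + 1) := by ring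

theorem norm_pow_succ_sub_pow_succ_le (a b : R) (n : ℕ) :
    ‖a ^ (n + 1) - b ^ (n + 1)‖ ≤ (n + 1) * max ‖a‖ ‖b‖ ^ n * ‖a - b‖ := by
  set M := max ‖a‖ ‖b‖
  induction n with
  | zero => simp
  | succ n ih =>
    calc ‖a ^ (n + 2) - b ^ (n + 2)‖
        = ‖a * (a ^ (n + 1) - b ^ (n + 1)) + (a - b) * b ^ (n + 1)‖ := by
          rw [pow_succ' a (n + 1), pow_succ' b (n + 1)]; congr 1; noncomm_ring
      _ ≤ ‖a‖ * ‖a ^ (n + 1) - b ^ (n + 1)‖ + ‖a - b‖ * ‖b‖ ^ (n + 1) :=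
          (norm_add_le _ _).trans (add_le_add (norm_mul_le _ _) (norm_mul_pow_le _ _ _))
      _ ≤ M * ((n + 1) * M ^ n * ‖a - b‖) + ‖a - b‖ * M ^ (n + 1) := by
          gcongr
          exacts [le_max_left _ _, le_max_right _ _]
      _ = (↑(n + 1) + 1) * M ^ (n + 1) * ‖a - b‖ := by push_cast; ring

end SeminormedRing

section BanachAlgebra

variable {𝔸 : Type*} [NormedRing 𝔸] [NormedAlgebra ℝ 𝔸] [CompleteSpace 𝔸]

theorem norm_exp_sub_exp_le (x y : 𝔸) :
    ‖exp x - exp y‖ ≤ ‖x - y‖ * Real.exp (max ‖x‖ ‖y‖) := by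
  set M := max ‖x‖ ‖y‖
  have hdiff : HasSum (fun n ↦ (n !⁻¹ : ℝ) • (x ^ n - y ^ n)) (exp x - exp y) := by
    simpa only [smul_sub] using (exp_series_hasSum_exp' (𝕂 := ℝ) x).sub (exp_series_hasSum_exp' y)
  have hshift :
      HasSum (fun n ↦ ((n + 1)! : ℝ)⁻¹ • (x ^ (n + 1) - y ^ (n + 1))) (exp x - exp y) := by
    simpa using (hasSum_nat_add_iff' 1).mpr hdiff
  have hreal : HasSum (fun n ↦ ‖x - y‖ * (M ^ n / n !)) (‖x - y‖ * Real.exp M) := by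
    rw [Real.exp_eq_exp_ℝ]
    exact (expSeries_div_hasSum_exp M).mul_left _
  refine hshift.norm_le_of_bounded hreal fun n ↦ ?_
  rw [norm_smul, norm_inv, Real.norm_natCast]
  calc ((n + 1)! : ℝ)⁻¹ * ‖x ^ (n + 1) - y ^ (n + 1)‖
      ≤ ((n + 1)! : ℝ)⁻¹ * ((n + 1) * M ^ n * ‖x - y‖) := by
        gcongr; exact norm_pow_succ_sub_pow_succ_le x y n
    _ = ‖x - y‖ * (M ^ n / n !) := by
        rw [Nat.factorial_succ]; push_cast; field_simp

theorem norm_exp_le_exp_mul_exp_div (x y : 𝔸) (hy : ∀ t : ℝ, 0 ≤ t → ‖exp (t • y)‖ ≤ 1)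
    {n : ℕ} (hn : 0 < n) :
    ‖exp x‖ ≤ Real.exp (‖x - y‖ * Real.exp (max ‖x‖ ‖y‖ / n)) := by
  -- `exp_nsmul` is stated for normed `ℚ`-algebras.
  let _ : NormedAlgebra ℚ 𝔸 := NormedAlgebra.restrictScalars ℚ ℝ 𝔸
  have hn' : (0 : ℝ) < n := Nat.cast_pos.mpr hn
  set c := ‖x - y‖ / n * Real.exp (max ‖x‖ ‖y‖ / n)
  have hroot : exp x = exp ((n : ℝ)⁻¹ • x) ^ n := by
    rw [← exp_nsmul, ← Nat.cast_smul_eq_nsmul ℝ, smul_smul, mul_inv_cancel₀ hn'.ne', one_smul]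
  have hstep : ‖exp ((n : ℝ)⁻¹ • x)‖ ≤ 1 + c := by
    calc ‖exp ((n : ℝ)⁻¹ • x)‖
        ≤ ‖exp ((n : ℝ)⁻¹ • y)‖ + ‖exp ((n : ℝ)⁻¹ • x) - exp ((n : ℝ)⁻¹ • y)‖ :=
          norm_le_insert' _ _
      _ ≤ 1 + ‖(n : ℝ)⁻¹ • x - (n : ℝ)⁻¹ • y‖
            * Real.exp (max ‖(n : ℝ)⁻¹ • x‖ ‖(n : ℝ)⁻¹ • y‖) :=
          add_le_add (hy _ (by positivity)) (norm_exp_sub_exp_le _ _)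
      _ = 1 + c := by
          simp only [c, ← smul_sub, norm_smul, norm_inv, Real.norm_natCast,
            ← mul_max_of_nonneg _ _ (inv_nonneg.mpr hn'.le)]
          ring_nf
  calc ‖exp x‖ ≤ ‖exp ((n : ℝ)⁻¹ • x)‖ ^ n := hroot ▸ norm_pow_le' _ hn
    _ ≤ Real.exp c ^ n := by
        gcongr
        exact hstep.trans (by linarith [Real.add_one_le_exp c])
    _ = Real.exp (‖x - y‖ * Real.exp (max ‖x‖ ‖y‖ / n)) := by
        rw [← Real.exp_nat_mul]; congr 1; simp only [c]; field_simp

theorem norm_exp_le_exp_norm_sub (x y : 𝔸) (hy : ∀ t : ℝ, 0 ≤ t → ‖exp (t • y)‖ ≤ 1) :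
    ‖exp x‖ ≤ Real.exp ‖x - y‖ := by
  have hlim : Tendsto (fun n : ℕ ↦ Real.exp (‖x - y‖ * Real.exp (max ‖x‖ ‖y‖ / n)))
      atTop (𝓝 (Real.exp ‖x - y‖)) := by
    simpa using ((tendsto_const_div_atTop_nhds_zero_nat (max ‖x‖ ‖y‖)).rexp.const_mul ‖x - y‖).rexp
  exact ge_of_tendsto hlim (eventually_atTop.mpr ⟨1, fun n hn ↦
    norm_exp_le_exp_mul_exp_div x y hy hn⟩)

end BanachAlgebra

theorem stmt8 {X : Type*} [NormedAddCommGroup X] [NormedSpace ℂ X] [CompleteSpace X]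
    (A B : X →L[ℂ] X)
    (hB : ∀ t : ℝ, 0 ≤ t → ‖exp ((t : ℂ) • B)‖ ≤ 1) :
    ∀ α : ℝ, 0 ≤ α → ‖exp ((α : ℂ) • A)‖ ≤ Real.exp (α * ‖A - B‖) := by
  intro α hα
  simp only [Complex.coe_smul] at hB ⊢
  have hαB : ∀ t : ℝ, 0 ≤ t → ‖exp (t • α • B)‖ ≤ 1 := fun t ht ↦ by
    simpa only [smul_smul] using hB (t * α) (mul_nonneg ht hα)
  simpa only [← smul_sub, norm_smul, Real.norm_of_nonneg hα] using
    norm_exp_le_exp_norm_sub (α • A) (α • B) hαB
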